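/- If tx is apart from every transaction in the sequence txs, then for any sequence B, B;tx;txs is a valid blockchain if and only if B;txs;tx is a valid blockchain, and in that case the two sequences are observationally equivalent. -/

import Mathlib

/-- Idealised EUTxO: positions, redeemers, datums are naturals; values are
multisets of chips (pairs of naturals), modelled as functions to ℕ. -/
abbrev Position := ℕ
abbrev Redeemer := ℕ
abbrev Datum := ℕ
abbrev Value := ℕ × ℕ → ℕ

/-- An input is a pair of a position and a redeemer. -/
structure Input where
  pos : Position
  redeemer : Redeemer

/-- An output is a tuple (position, validator, datum, value).  Since validators
are sets of tuples mentioning contexts (which mention outputs), we break the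
type-level recursion by abstracting the type `V` of validators together with a
validation relation `val : V → Redeemer → Datum → Value → Context V → Prop`. -/
structure Output (V : Type) where
  pos : Position
  validator : V
  datum : Datum
  value : Value

/-- A transaction is a (finite) set of inputs and a (finite) set of outputs. -/
structure Tx (V : Type) where
  inputs : List Input
  outputs : List (Output V)

/-- A context is a transaction pointed at one of its inputs. -/
structure Context (V : Type) where
  tx : Tx V
  point : Input

variable {V : Type}

/-- All outputs appearing in a sequence of transactions. -/
def outputsOf (B : List (Tx V)) : List (Output V) := B.flatMap Tx.outputs

/-- A sequence of transactions is a valid blockchain when: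
(1) distinct outputs appearing in it have distinct positions;
(2) every input points to (has the position of) a unique output in a strictly
    earlier transaction;
(3) each pointing input satisfies the validator of the output it points to. -/
def Valid (val : V → Redeemer → Datum → Value → Context V → Prop)
    (B : List (Tx V)) : Prop :=
  (outputsOf B).Pairwise (fun o o' => o.pos ≠ o'.pos) ∧
  (∀ n (hn : n < B.length), ∀ i ∈ B[n].inputs,
    ∃! o : Output V, o ∈ outputsOf (B.take n) ∧ o.pos = i.pos) ∧
  (∀ n (hn : n < B.length), ∀ i ∈ B[n].inputs, ∀ o ∈ outputsOf (B.take n),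
    o.pos = i.pos →
    val o.validator i.redeemer o.datum o.value ⟨B[n], i⟩)

/-- The unspent outputs of a sequence of transactions: outputs to which no
input of a strictly later transaction points. -/
def UTxO (B : List (Tx V)) : Set (Output V) :=
  { o | ∃ m, ∃ hm : m < B.length, o ∈ B[m].outputs ∧
        ∀ n, ∀ hn : n < B.length, m < n → ∀ i ∈ B[n].inputs, i.pos ≠ o.pos }

/-- A transaction mentions a position when it occurs in one of its inputs or
outputs. -/
def Mentions (tx : Tx V) (p : Position) : Prop :=
  (∃ i ∈ tx.inputs, i.pos = p) ∨ (∃ o ∈ tx.outputs, o.pos = p)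

/-- Two transactions are apart when they mention disjoint sets of positions. -/
def Apart (tx tx' : Tx V) : Prop := ∀ p, Mentions tx p → ¬ Mentions tx' p

/-! Validity asks, of each transaction, something about the outputs of the transactions before
it, and only about those outputs whose position one of its inputs names. Moving `tx` past an
apart `txs` adds or removes, in front of each transaction, only outputs that none of its inputs
names, and merely permutes the outputs of the chain. For a valid chain the unspent outputs are
the outputs named by no input anywhere in the chain, which is invariant under permutation. -/

theorem forall_take_getElem_append {α : Type*} (p : List α → α → Prop) (A M : List α) :
    (∀ n (hn : n < (A ++ M).length), p ((A ++ M).take n) (A ++ M)[n]) ↔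
      (∀ n (hn : n < A.length), p (A.take n) A[n]) ∧
        ∀ n (hn : n < M.length), p (A ++ M.take n) M[n] := by
  have getElem_left : ∀ n (hn : n < A.length) (h : n < (A ++ M).length),
      (A ++ M)[n] = A[n] := fun n hn _ => List.getElem_append_left hn
  have getElem_right : ∀ n (hn : n < M.length) (h : A.length + n < (A ++ M).length),
      (A ++ M)[A.length + n] = M[n] := fun n hn _ => by simp [List.getElem_append_right]
  constructor
  · intro h
    refine ⟨fun n hn => ?_, fun n hn => ?_⟩
    · have := h n (by simp; omega)
      rwa [List.take_append_of_le_length hn.le, getElem_left n hn] at this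
    · have := h (A.length + n) (by simp; omega)
      rwa [List.take_length_add_append, getElem_right n hn] at this
  · rintro ⟨hA, hM⟩ n hn
    rcases lt_or_ge n A.length with hlt | hle
    · rw [List.take_append_of_le_length hlt.le, getElem_left n hlt]
      exact hA n hlt
    · obtain ⟨k, rfl⟩ := Nat.exists_eq_add_of_le hle
      have hk : k < M.length := by simp at hn; omega
      rw [List.take_length_add_append, getElem_right k hk]
      exact hM k hk

theorem forall_take_getElem_append_singleton {α : Type*} (p : List α → α → Prop)
    (A : List α) (a : α) :
    (∀ n (hn : n < (A ++ [a]).length), p ((A ++ [a]).take n) (A ++ [a])[n]) ↔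
      (∀ n (hn : n < A.length), p (A.take n) A[n]) ∧ p A a := by
  rw [forall_take_getElem_append]
  simp

theorem perm_append_singleton_append {α : Type*} (A : List α) (a : α) (M : List α) :
    (A ++ [a] ++ M).Perm (A ++ M ++ [a]) := by
  simpa only [List.append_assoc] using List.perm_append_comm.append_left A

theorem outputsOf_append (A C : List (Tx V)) :
    outputsOf (A ++ C) = outputsOf A ++ outputsOf C :=
  List.flatMap_append

theorem List.Perm.outputsOf {L L' : List (Tx V)} (hp : L.Perm L') :
    (outputsOf L).Perm (outputsOf L') :=
  hp.flatMap_right _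

section

variable (val : V → Redeemer → Datum → Value → Context V → Prop)

def InputsValid (P : List (Tx V)) (t : Tx V) : Prop :=
  ∀ i ∈ t.inputs, (∃! o : Output V, o ∈ outputsOf P ∧ o.pos = i.pos) ∧
    ∀ o ∈ outputsOf P, o.pos = i.pos → val o.validator i.redeemer o.datum o.value ⟨t, i⟩

theorem valid_iff_forall_inputsValid (L : List (Tx V)) :
    Valid val L ↔ (outputsOf L).Pairwise (fun o o' => o.pos ≠ o'.pos) ∧
      ∀ n (hn : n < L.length), InputsValid val (L.take n) L[n] := by
  simp only [Valid, InputsValid, forall_and]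

theorem inputsValid_congr {P P' : List (Tx V)} {t : Tx V}
    (h : ∀ i ∈ t.inputs, ∀ o : Output V, o.pos = i.pos →
      (o ∈ outputsOf P ↔ o ∈ outputsOf P')) :
    InputsValid val P t ↔ InputsValid val P' t := by
  refine forall₂_congr fun i hi => and_congr ?_ ?_
  · exact existsUnique_congr fun o => ⟨fun ⟨ho, hpos⟩ => ⟨(h i hi o hpos).1 ho, hpos⟩,
      fun ⟨ho, hpos⟩ => ⟨(h i hi o hpos).2 ho, hpos⟩⟩
  · exact forall_congr' fun o => ⟨fun hv ho hpos => hv ((h i hi o hpos).2 ho) hpos,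
      fun hv ho hpos => hv ((h i hi o hpos).1 ho) hpos⟩

theorem inputsValid_append_middle_iff {P Q S : List (Tx V)} {t : Tx V}
    (h : ∀ o ∈ outputsOf Q, ∀ i ∈ t.inputs, o.pos ≠ i.pos) :
    InputsValid val (P ++ Q ++ S) t ↔ InputsValid val (P ++ S) t := by
  refine inputsValid_congr val fun i hi o hpos => ?_
  have : o ∉ outputsOf Q := fun ho => h o ho i hi hpos
  simp only [outputsOf_append, List.mem_append]
  tauto

end

theorem Apart.pos_output_ne_pos_input {tx tx' : Tx V} (h : Apart tx tx') {o : Output V}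
    {i : Input} (ho : o ∈ tx.outputs) (hi : i ∈ tx'.inputs) : o.pos ≠ i.pos :=
  fun hpos => h o.pos (.inr ⟨o, ho, rfl⟩) (.inl ⟨i, hi, hpos.symm⟩)

theorem Apart.pos_input_ne_pos_output {tx tx' : Tx V} (h : Apart tx tx') {i : Input}
    {o : Output V} (hi : i ∈ tx.inputs) (ho : o ∈ tx'.outputs) : i.pos ≠ o.pos :=
  fun hpos => h i.pos (.inl ⟨i, hi, rfl⟩) (.inr ⟨o, ho, hpos.symm⟩)

theorem valid_append_singleton_append_iff
    (val : V → Redeemer → Datum → Value → Context V → Prop) (B : List (Tx V))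
    {txs : List (Tx V)} {tx : Tx V} (h : ∀ tx' ∈ txs, Apart tx tx') :
    Valid val (B ++ [tx] ++ txs) ↔ Valid val (B ++ txs ++ [tx]) := by
  have htx : InputsValid val (B ++ txs ++ []) tx ↔ InputsValid val (B ++ []) tx :=
    inputsValid_append_middle_iff val fun o ho i hi => by
      obtain ⟨tx', htx', ho'⟩ := List.mem_flatMap.1 ho
      exact ((h tx' htx').pos_input_ne_pos_output hi ho').symm
  have htxs : ∀ n (hn : n < txs.length), InputsValid val (B ++ [tx] ++ txs.take n) txs[n] ↔
      InputsValid val (B ++ txs.take n) txs[n] := fun n hn =>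
    inputsValid_append_middle_iff val fun o ho i hi => by
      simp only [outputsOf, List.flatMap_singleton] at ho
      exact (h _ (List.getElem_mem hn)).pos_output_ne_pos_input ho hi
  simp only [List.append_nil] at htx
  have hdisj := (perm_append_singleton_append B tx txs).outputsOf.pairwise_iff
    (R := fun o o' : Output V => o.pos ≠ o'.pos) fun hne heq => hne heq.symm
  rw [valid_iff_forall_inputsValid, valid_iff_forall_inputsValid, hdisj,
    forall_take_getElem_append, forall_take_getElem_append_singleton,
    forall_take_getElem_append_singleton, forall_take_getElem_append, htx]
  simp only [htxs]
  tauto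

theorem Valid.pos_input_ne_output_of_le
    {val : V → Redeemer → Datum → Value → Context V → Prop} {L : List (Tx V)}
    (hv : Valid val L) {n m : ℕ} (hm : m < L.length) (hnm : n ≤ m) {i : Input} {o : Output V}
    (hi : i ∈ (L[n]'(by omega)).inputs) (ho : o ∈ L[m].outputs) : i.pos ≠ o.pos := by
  obtain ⟨hdisj, hpoint, -⟩ := hv
  obtain ⟨o', ⟨ho', hpos'⟩, -⟩ := hpoint n (by omega) i hi
  have ho_drop : o ∈ outputsOf (L.drop n) :=
    List.mem_flatMap.2
      ⟨L[m], List.mem_drop_iff_getElem.2 ⟨m - n, by omega, by congr 1; omega⟩, ho⟩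
  rw [← List.take_append_drop n L, outputsOf_append, List.pairwise_append] at hdisj
  exact hpos' ▸ hdisj.2.2 o' ho' o ho_drop

theorem Valid.utxo_eq {val : V → Redeemer → Datum → Value → Context V → Prop}
    {L : List (Tx V)} (hv : Valid val L) :
    UTxO L = {o | o ∈ outputsOf L ∧ ∀ t ∈ L, ∀ i ∈ t.inputs, i.pos ≠ o.pos} := by
  ext o
  constructor
  · rintro ⟨m, hm, ho, hunspent⟩
    refine ⟨List.mem_flatMap.2 ⟨L[m], List.getElem_mem hm, ho⟩, fun t ht i hi => ?_⟩
    obtain ⟨n, hn, rfl⟩ := List.mem_iff_getElem.1 ht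
    rcases lt_or_ge m n with hmn | hnm
    · exact hunspent n hn hmn i hi
    · exact hv.pos_input_ne_output_of_le hm hnm hi ho
  · rintro ⟨ho, hunspent⟩
    obtain ⟨t, ht, hot⟩ := List.mem_flatMap.1 ho
    obtain ⟨m, hm, rfl⟩ := List.mem_iff_getElem.1 ht
    exact ⟨m, hm, hot, fun n hn _ i hi => hunspent L[n] (List.getElem_mem hn) i hi⟩

theorem utxo_eq_of_perm {val : V → Redeemer → Datum → Value → Context V → Prop}
    {L L' : List (Tx V)} (hv : Valid val L) (hv' : Valid val L') (hp : L.Perm L') :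
    UTxO L = UTxO L' := by
  simp only [hv.utxo_eq, hv'.utxo_eq, hp.outputsOf.mem_iff, hp.mem_iff]

/-- If `tx` is apart from every transaction in `txs`, then `B;tx;txs` is a
valid blockchain iff `B;txs;tx` is, and in that case they are observationally
equivalent. -/
theorem valid_and_utxo_commute_of_apart
    (val : V → Redeemer → Datum → Value → Context V → Prop)
    (B txs : List (Tx V)) (tx : Tx V)
    (h : ∀ tx' ∈ txs, Apart tx tx') :
    (Valid val (B ++ [tx] ++ txs) ↔ Valid val (B ++ txs ++ [tx])) ∧
    (Valid val (B ++ [tx] ++ txs) →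
      UTxO (B ++ [tx] ++ txs) = UTxO (B ++ txs ++ [tx])) := by
  have hvalid := valid_append_singleton_append_iff val B h
  exact ⟨hvalid, fun hv =>
    utxo_eq_of_perm hv (hvalid.1 hv) (perm_append_singleton_append B tx txs)⟩
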